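/- arXiv:math/0701252 — 2 statements merged into one kernel-verified Lean document; each statement's English description precedes it below -/
import Mathlib

section
/- The only integer solutions (A,B,C) with gcd(A,B) = 1 and B odd of the equation -64A^8 - 16A^4·B^2 + B^4 = C^2 satisfy (|A|,|B|,|C|) = (0,1,1). -/
lemma odd_isCoprime_two {v : ℤ} (hv : Odd v) : IsCoprime (2 : ℤ) v := by
  obtain ⟨j, hj⟩ := hv
  exact ⟨-j, 1, by rw [hj]; ring⟩

lemma odd_of_odd_pow {t : ℤ} {k : ℕ} (hk : k ≠ 0) (h : Odd (t ^ k)) : Odd t := by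
  rcases Int.even_or_odd t with he | ho
  · exact absurd h (Int.not_odd_iff_even.mpr (Int.even_pow.mpr ⟨he, hk⟩))
  · exact ho

lemma split_pow {u v m : ℤ} (k c : ℕ) (hck : c < k) (hkE : Even k) (hm : m ≠ 0)
    (hcop : IsCoprime u v) (hv : Odd v) (h : u * v = 2 ^ c * m ^ k) :
    ∃ s t ε : ℤ, (ε = 1 ∨ ε = -1) ∧ u = ε * (2 ^ c * s ^ k) ∧ v = ε * t ^ k ∧
      (s * t) ^ k = m ^ k ∧ Odd t ∧ IsCoprime s t := by
  have hk0 : k ≠ 0 := by omega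
  have hcop2 : IsCoprime ((2:ℤ) ^ (k - c) * u) v :=
    ((odd_isCoprime_two hv).pow_left).mul_left hcop
  have h2 : ((2:ℤ) ^ (k - c) * u) * v = (2 * m) ^ k := by
    rw [mul_assoc, h, mul_pow, ← mul_assoc, ← pow_add]
    congr 2
    omega
  obtain ⟨s₁, hs₁⟩ := exists_associated_pow_of_mul_eq_pow' hcop2 h2
  obtain ⟨t, ht₁⟩ := exists_associated_pow_of_mul_eq_pow' hcop2.symm (by rw [mul_comm]; exact h2)
  rw [Int.associated_iff] at hs₁ ht₁
  have hdd : (2:ℤ) ∣ 2 ^ (k - c) * u :=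
    Dvd.dvd.mul_right ⟨2 ^ (k - c - 1), by rw [← pow_succ']; congr 1; omega⟩ u
  have hse : Even s₁ := by
    have h2d : Even (s₁ ^ k) := by
      rcases hs₁ with h' | h'
      · exact even_iff_two_dvd.mpr (h' ▸ hdd)
      · rw [h']; exact (even_neg).mpr (even_iff_two_dvd.mpr hdd)
    exact (Int.even_pow.mp h2d).1
  obtain ⟨s, hs⟩ := hse
  have hs2 : s₁ = 2 * s := by omega
  have hpow : s₁ ^ k = 2 ^ (k - c) * (2 ^ c * s ^ k) := by
    rw [hs2, mul_pow, ← mul_assoc, ← pow_add]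
    congr 2
    omega
  have h2kc : (2:ℤ) ^ (k - c) ≠ 0 := by positivity
  have hu : u = 2 ^ c * s ^ k ∨ u = -(2 ^ c * s ^ k) := by
    rcases hs₁ with h' | h'
    · left; apply mul_left_cancel₀ h2kc; rw [← h', hpow]
    · right; apply mul_left_cancel₀ h2kc
      rw [hpow] at h'
      linarith [h']
  have hv2 : v = t ^ k ∨ v = -(t ^ k) := by
    rcases ht₁ with h' | h'
    · left; exact h'.symm
    · right; linarith [h']
  have hprodnz : u * v ≠ 0 := by
    rw [h]
    have : m ^ k ≠ 0 := pow_ne_zero _ hm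
    positivity
  have hsne : s ≠ 0 := by
    rintro rfl
    apply hprodnz
    have : u = 0 := by rcases hu with h' | h' <;> rw [h'] <;> simp [zero_pow hk0]
    rw [this, zero_mul]
  have htne : t ≠ 0 := by
    rintro rfl
    apply hprodnz
    have : v = 0 := by rcases hv2 with h' | h' <;> rw [h'] <;> simp [zero_pow hk0]
    rw [this, mul_zero]
  have hPpos : (0:ℤ) < 2 ^ c * s ^ k := by
    have := hkE.pow_pos hsne (a := s)
    positivity
  have hQpos : (0:ℤ) < t ^ k := hkE.pow_pos htne
  have hOdd : Odd t := by
    apply odd_of_odd_pow (k := k) hk0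
    rcases hv2 with h' | h'
    · rwa [← h']
    · rw [← odd_neg, ← h']; exact hv
  have hcopst : IsCoprime s t := by
    have h1 : IsCoprime (2 ^ c * s ^ k) (t ^ k) := by
      rcases hu with h' | h' <;> rcases hv2 with h'' | h'' <;> rw [h', h''] at hcop
      · exact hcop
      · simpa using hcop.neg_right
      · simpa using hcop.neg_left
      · simpa using hcop.neg_left.neg_right
    exact ((IsCoprime.pow_left_iff (by omega)).mp
      ((IsCoprime.pow_right_iff (by omega)).mp h1.of_mul_left_right))
  have hfin : ∀ ε : ℤ, u = ε * (2 ^ c * s ^ k) → v = ε * t ^ k → (s * t) ^ k = m ^ k := by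
    intro ε hu' hv'
    have hε2 : ε * ε * (2 ^ c * (s * t) ^ k) = 2 ^ c * m ^ k := by
      rw [← h, hu', hv', mul_pow]; ring
    have : ε = 1 ∨ ε = -1 := by
      rcases hu with h' | h' <;> rw [h'] at hu' <;>
        [left; right] <;> nlinarith [hu']
    rcases this with rfl | rfl <;>
    · apply mul_left_cancel₀ (show (2:ℤ)^c ≠ 0 by positivity)
      linarith [hε2]
  rcases hu with h' | h' <;> rcases hv2 with h'' | h''
  · exact ⟨s, t, 1, Or.inl rfl, by linarith, by linarith, hfin 1 (by linarith) (by linarith), hOdd, hcopst⟩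
  · exfalso; rw [h', h''] at h; nlinarith [h, hkE.pow_pos hm (a := m), pow_pos (show (0:ℤ) < 2 by norm_num) c]
  · exfalso; rw [h', h''] at h; nlinarith [h, hkE.pow_pos hm (a := m), pow_pos (show (0:ℤ) < 2 by norm_num) c]
  · exact ⟨s, t, -1, Or.inr rfl, by linarith, by linarith,
      hfin (-1) (by linarith) (by linarith), hOdd, hcopst⟩

-- coprimality of the two half-factors
lemma cop_helper (c' k j i : ℕ) (hk : k ≠ 0) (hj : j ≠ 0) (hi : i ≠ 0)
    {γ δ x y e : ℤ} (hxy : IsCoprime x y) (hodd : Odd (γ + δ))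
    (hprod : γ * δ = 2 ^ c' * x ^ k) (hsum : γ + δ + e * x ^ j = y ^ i) :
    IsCoprime γ δ := by
  rw [Int.isCoprime_iff_gcd_eq_one]
  by_contra hne
  obtain ⟨p, hp, hpdvd⟩ := Nat.exists_prime_and_dvd hne
  have hpγ : (p : ℤ) ∣ γ := dvd_trans (Int.natCast_dvd_natCast.mpr hpdvd) (Int.gcd_dvd_left _ _)
  have hpδ : (p : ℤ) ∣ δ := dvd_trans (Int.natCast_dvd_natCast.mpr hpdvd) (Int.gcd_dvd_right _ _)
  have hpsum : (p : ℤ) ∣ γ + δ := dvd_add hpγ hpδ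
  have hp2 : p ≠ 2 := by
    rintro rfl
    obtain ⟨j', hj'⟩ := hodd
    obtain ⟨w, hw⟩ := hpsum
    omega
  have hpP : Prime (p : ℤ) := Nat.prime_iff_prime_int.mp hp
  have hpx : (p:ℤ) ∣ x := by
    have h1 : (p:ℤ) ∣ 2 ^ c' * x ^ k := hprod ▸ hpγ.mul_right δ
    rcases hpP.dvd_mul.mp h1 with h2 | h2
    · exfalso
      have h3 := hpP.dvd_of_dvd_pow h2
      have h4 : p ∣ 2 := by exact_mod_cast h3
      have := (Nat.prime_dvd_prime_iff_eq hp Nat.prime_two).mp h4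
      exact hp2 this
    · exact hpP.dvd_of_dvd_pow h2
  have hpy : (p:ℤ) ∣ y := by
    apply hpP.dvd_of_dvd_pow (n := i)
    rw [← hsum]
    exact dvd_add hpsum (Dvd.dvd.mul_left (dvd_pow hpx hj) e)
  exact hpP.not_unit (hxy.isUnit_of_dvd' hpx hpy)

lemma natAbs_eq_of_pow_eq {a b : ℤ} (k : ℕ) (hk : k ≠ 0) (h : a ^ k = b ^ k) :
    a.natAbs = b.natAbs := by
  have : a.natAbs ^ k = b.natAbs ^ k := by
    have := congrArg Int.natAbs h
    simpa [Int.natAbs_pow] using this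
  exact Nat.pow_left_injective (by omega) this

-- sign fix in step 1 (mod 4)
lemma zmod4_sign : ∀ a b j j' : ZMod 4, -(4*j + (2*a+1)^8) + 4*j' - (2*b+1)^2 ≠ 0 := by decide

-- step 2 impossible branch (mod 4)
lemma zmod4_step2 : ∀ a b j : ZMod 4, (2*a+1)^4 + (2*b+1)^8 + 4*j ≠ 0 := by decide

-- step 3 impossible branches (mod 16)
lemma zmod16_s3a : ∀ a b c : ZMod 16,
    (2*a+1)^4 - 2*(2*b+1)^4*(2*c+1)^4 - (2*(2*b+1)^8 + (2*c+1)^8) ≠ 0 := by decide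

lemma zmod16_s3b : ∀ a b c : ZMod 16,
    (2*a+1)^4 - 2*(2*b+1)^4*(2*c+1)^4 + (2*(2*b+1)^8 + (2*c+1)^8) ≠ 0 := by decide

lemma zmod16_s3c : ∀ a b c : ZMod 16,
    (2*a+1)^4 - 2*(2*b)^4*(2*c+1)^4 + (2*(2*b)^8 + (2*c+1)^8) ≠ 0 := by decide

-- step 4 impossible branch (mod 16)
lemma zmod16_s4 : ∀ a b j : ZMod 16, (2*a+1)^4 + 16*j + (2*b+1)^8 ≠ 0 := by decide

lemma pow4_natAbs (a : ℤ) : a ^ 4 = ((a.natAbs : ℤ)) ^ 4 := by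
  rcases Int.natAbs_eq a with h | h
  · conv_lhs => rw [h]
  · conv_lhs => rw [h]
    ring

lemma keyStep2 {m n B : ℤ} (hm : m ≠ 0) (hn : Odd n) (hmn : IsCoprime m n)
    (hB2 : B ^ 2 = 32 * m ^ 8 + 8 * (m ^ 4 * n ^ 4) + n ^ 8) :
    ∃ r o : ℤ, n ^ 4 = o ^ 8 - 4 * (r ^ 4 * o ^ 4) - 4 * r ^ 8 ∧
      (r * o) ^ 4 = m ^ 4 ∧ Odd o ∧ IsCoprime r o := by
  have hXodd : Odd (n ^ 4 + 4 * m ^ 4) := by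
    have h1 : Odd (n ^ 4) := hn.pow
    obtain ⟨j, hj⟩ := h1
    exact ⟨j + 2 * m ^ 4, by rw [hj]; ring⟩
  have hPT : PythagoreanTriple (n ^ 4 + 4 * m ^ 4) (4 * m ^ 4) B := by
    unfold PythagoreanTriple
    linear_combination -hB2
  have hXm : IsCoprime (n ^ 4 + 4 * m ^ 4) (m ^ 4) := by
    have h1 : IsCoprime (n ^ 4) (m ^ 4) := hmn.symm.pow
    have h2 := h1.add_mul_left_left 4
    have h3 : n ^ 4 + m ^ 4 * 4 = n ^ 4 + 4 * m ^ 4 := by ring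
    rwa [h3] at h2
  have hX2 : IsCoprime (n ^ 4 + 4 * m ^ 4) (2 : ℤ) := (odd_isCoprime_two hXodd).symm
  have hgcd : Int.gcd (n ^ 4 + 4 * m ^ 4) (4 * m ^ 4) = 1 := by
    rw [← Int.isCoprime_iff_gcd_eq_one]
    have h4 : (4 : ℤ) * m ^ 4 = 2 * (2 * m ^ 4) := by ring
    have h5 := hX2.mul_right (hX2.mul_right hXm)
    rwa [← h4] at h5
  obtain ⟨u, v, huv, hzB, hguv, hpar⟩ := PythagoreanTriple.coprime_classification.mp ⟨hPT, hgcd⟩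
  have hcopuv : IsCoprime u v := Int.isCoprime_iff_gcd_eq_one.mpr hguv
  rcases huv with ⟨hX, hY⟩ | ⟨hX, hY⟩
  swap
  · exfalso
    rw [hX] at hXodd
    exact (Int.not_odd_iff_even.mpr ⟨u * v, by ring⟩) hXodd
  rcases hpar with ⟨hu, hv⟩ | ⟨hu, hv⟩
  · -- u even, v odd
    have hvodd : Odd v := Int.odd_iff.mpr hv
    have huv2 : u * v = 2 ^ 1 * m ^ 4 := by linarith [hY]
    obtain ⟨r, o, ε, hε, hu', hv', hro, hoodd, hcopro⟩ :=
      split_pow 4 1 (by norm_num) ⟨2, rfl⟩ hm hcopuv hvodd huv2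
    exfalso
    have hX2' : n ^ 4 + 4 * m ^ 4 = 4 * r ^ 8 - o ^ 8 := by
      rw [hX, hu', hv']
      rcases hε with rfl | rfl <;> ring
    have hm4 : m ^ 4 = r ^ 4 * o ^ 4 := by rw [← hro]; ring
    obtain ⟨a, ha⟩ := hn
    obtain ⟨b, hb⟩ := hoodd
    have hint : ((2*a+1) ^ 4 + (2*b+1) ^ 8 + 4 * (r ^ 4 * (2*b+1) ^ 4 - r ^ 8) : ℤ) = 0 := by
      rw [← ha, ← hb]
      linear_combination hX2' - 4 * hm4
    have hcast := congrArg (fun z : ℤ => (z : ZMod 4)) hint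
    push_cast at hcast
    exact zmod4_step2 _ _ _ hcast
  · -- v even, u odd
    have huodd : Odd u := Int.odd_iff.mpr hu
    have huv2 : v * u = 2 ^ 1 * m ^ 4 := by linarith [hY]
    obtain ⟨r, o, ε, hε, hv', hu', hro, hoodd, hcopro⟩ :=
      split_pow 4 1 (by norm_num) ⟨2, rfl⟩ hm hcopuv.symm huodd huv2
    have hm4 : m ^ 4 = r ^ 4 * o ^ 4 := by rw [← hro]; ring
    refine ⟨r, o, ?_, by rw [hro], hoodd, hcopro⟩
    have hX2' : n ^ 4 + 4 * m ^ 4 = o ^ 8 - 4 * r ^ 8 := by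
      rw [hX, hu', hv']
      rcases hε with rfl | rfl <;> ring
    rw [hm4] at hX2'
    linarith [hX2']

lemma r4_of_pow8 {d e r : ℤ} (h : (d * e) ^ 8 = r ^ 8) : r ^ 4 = d ^ 4 * e ^ 4 := by
  have h1 := natAbs_eq_of_pow_eq 8 (by norm_num) h
  calc r ^ 4 = ((r.natAbs : ℤ)) ^ 4 := pow4_natAbs r
    _ = (((d*e).natAbs : ℤ)) ^ 4 := by rw [h1]
    _ = (d*e) ^ 4 := (pow4_natAbs _).symm
    _ = d ^ 4 * e ^ 4 := by ring

lemma step3_sign {d e o r ε : ℤ} (ho : Odd o) (he : Odd e)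
    (hr4 : r ^ 4 = d ^ 4 * e ^ 4) (hε : ε = 1 ∨ ε = -1)
    (heq : o ^ 4 = ε * (2 * d ^ 8) + ε * e ^ 8 + 2 * r ^ 4) :
    o ^ 4 = 2 * d ^ 8 + e ^ 8 + 2 * (d ^ 4 * e ^ 4) ∧ Even d := by
  obtain ⟨a, ha⟩ := ho
  obtain ⟨c, hc⟩ := he
  rcases Int.even_or_odd d with ⟨b, hb⟩ | ⟨b, hb⟩
  · have hb' : d = 2 * b := by omega
    rcases hε with rfl | rfl
    · exact ⟨by rw [← hr4]; linarith [heq], ⟨b, by omega⟩⟩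
    · exfalso
      have hint : ((2*a+1)^4 - 2*(2*b)^4*(2*c+1)^4 + (2*(2*b)^8 + (2*c+1)^8) : ℤ) = 0 := by
        rw [← ha, ← hb', ← hc]
        linear_combination heq + 2 * hr4
      have hcast := congrArg (fun z : ℤ => (z : ZMod 16)) hint
      push_cast at hcast
      exact zmod16_s3c _ _ _ hcast
  · have hb' : d = 2 * b + 1 := by omega
    exfalso
    rcases hε with rfl | rfl
    · have hint : ((2*a+1)^4 - 2*(2*b+1)^4*(2*c+1)^4 - (2*(2*b+1)^8 + (2*c+1)^8) : ℤ) = 0 := by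
        rw [← ha, ← hb', ← hc]
        linear_combination heq + 2 * hr4
      have hcast := congrArg (fun z : ℤ => (z : ZMod 16)) hint
      push_cast at hcast
      exact zmod16_s3a _ _ _ hcast
    · have hint : ((2*a+1)^4 - 2*(2*b+1)^4*(2*c+1)^4 + (2*(2*b+1)^8 + (2*c+1)^8) : ℤ) = 0 := by
        rw [← ha, ← hb', ← hc]
        linear_combination heq + 2 * hr4
      have hcast := congrArg (fun z : ℤ => (z : ZMod 16)) hint
      push_cast at hcast
      exact zmod16_s3b _ _ _ hcast

lemma keyStep3 {r o n : ℤ} (hr : r ≠ 0) (hn : Odd n) (ho : Odd o) (hro : IsCoprime r o)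
    (hE2 : n ^ 4 = o ^ 8 - 4 * (r ^ 4 * o ^ 4) - 4 * r ^ 8) :
    ∃ d e : ℤ, o ^ 4 = 2 * d ^ 8 + e ^ 8 + 2 * (d ^ 4 * e ^ 4) ∧
      (d * e) ^ 8 = r ^ 8 ∧ Odd e ∧ Even d ∧ IsCoprime d e := by
  obtain ⟨o2, ho2⟩ := (ho.pow : Odd (o ^ 4))
  obtain ⟨n2, hn2⟩ := (hn.pow : Odd (n ^ 2))
  set γ := o2 - r ^ 4 - n2 with hγdef
  set δ := o2 - r ^ 4 + n2 + 1 with hδdef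
  have e1 : 2 * γ = o ^ 4 - 2 * r ^ 4 - n ^ 2 := by rw [hγdef, ho2, hn2]; ring
  have e2 : 2 * δ = o ^ 4 - 2 * r ^ 4 + n ^ 2 := by rw [hδdef, ho2, hn2]; ring
  have hγδ4 : 4 * (γ * δ) = 4 * (2 ^ 1 * r ^ 8) := by
    have : (2 * γ) * (2 * δ) = 4 * (γ * δ) := by ring
    rw [← this, e1, e2]
    linear_combination -hE2
  have hγδ : γ * δ = 2 ^ 1 * r ^ 8 := mul_left_cancel₀ four_ne_zero hγδ4
  have hsumodd : Odd (γ + δ) := ⟨o2 - r ^ 4, by rw [hγdef, hδdef]; ring⟩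
  have hsum : γ + δ + 2 * r ^ 4 = o ^ 4 := by rw [hγdef, hδdef, ho2]; ring
  have hcop : IsCoprime γ δ :=
    cop_helper 1 8 4 4 (by norm_num) (by norm_num) (by norm_num) hro hsumodd hγδ hsum
  have hmain : ∃ d e ε : ℤ, (ε = 1 ∨ ε = -1) ∧ γ + δ = ε * (2 * d ^ 8) + ε * e ^ 8 ∧
      (d * e) ^ 8 = r ^ 8 ∧ Odd e ∧ IsCoprime d e := by
    rcases Int.even_or_odd γ with hγe | hγo
    · have hδo : Odd δ := by
        obtain ⟨j, hj⟩ := hsumodd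
        obtain ⟨i, hi⟩ := hγe
        exact ⟨j - i, by omega⟩
      obtain ⟨d, e, ε, hε, h1, h2, h3, h4, h5⟩ :=
        split_pow 8 1 (by norm_num) ⟨4, rfl⟩ hr hcop hδo hγδ
      exact ⟨d, e, ε, hε, by rw [h1, h2]; ring, h3, h4, h5⟩
    · obtain ⟨d, e, ε, hε, h1, h2, h3, h4, h5⟩ :=
        split_pow 8 1 (by norm_num) ⟨4, rfl⟩ hr hcop.symm hγo (by rw [mul_comm]; exact hγδ)
      exact ⟨d, e, ε, hε, by rw [h1, h2]; ring, h3, h4, h5⟩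
  obtain ⟨d, e, ε, hε, hsum2, hr8, heodd, hcopde⟩ := hmain
  have hr4 : r ^ 4 = d ^ 4 * e ^ 4 := r4_of_pow8 hr8
  have heq : o ^ 4 = ε * (2 * d ^ 8) + ε * e ^ 8 + 2 * r ^ 4 := by
    rw [← hsum, hsum2]
  obtain ⟨hfin, hdE⟩ := step3_sign ho heodd hr4 hε heq
  exact ⟨d, e, hfin, hr8, heodd, hdE, hcopde⟩

lemma keyStep4 {d e o : ℤ} (hd : d ≠ 0) (hdE : Even d) (he : Odd e) (hde : IsCoprime d e)
    (hE3 : o ^ 4 = 2 * d ^ 8 + e ^ 8 + 2 * (d ^ 4 * e ^ 4)) :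
    ∃ f g : ℤ, e ^ 4 = g ^ 8 - 16 * (f ^ 4 * g ^ 4) - 64 * f ^ 8 ∧
      d ^ 4 = 16 * (f ^ 4 * g ^ 4) ∧ Odd g ∧ IsCoprime f g := by
  have hXodd : Odd (e ^ 4 + d ^ 4) := by
    have h1 : Odd (e ^ 4) := he.pow
    obtain ⟨b, hb⟩ := hdE
    obtain ⟨j, hj⟩ := h1
    have hd2 : d = 2 * b := by omega
    exact ⟨j + 8 * b ^ 4, by rw [hj, hd2]; ring⟩
  have hPT : PythagoreanTriple (e ^ 4 + d ^ 4) (d ^ 4) (o ^ 2) := by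
    unfold PythagoreanTriple
    linear_combination -hE3
  have hgcd : Int.gcd (e ^ 4 + d ^ 4) (d ^ 4) = 1 := by
    rw [← Int.isCoprime_iff_gcd_eq_one]
    have h1 : IsCoprime (e ^ 4) (d ^ 4) := hde.symm.pow
    have h2 := h1.add_mul_left_left 1
    have h3 : e ^ 4 + d ^ 4 * 1 = e ^ 4 + d ^ 4 := by ring
    rwa [h3] at h2
  obtain ⟨p, q, hpq, hzo, hgpq, hpar⟩ := PythagoreanTriple.coprime_classification.mp ⟨hPT, hgcd⟩
  have hcoppq : IsCoprime p q := Int.isCoprime_iff_gcd_eq_one.mpr hgpq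
  rcases hpq with ⟨hX, hY⟩ | ⟨hX, hY⟩
  swap
  · exfalso
    rw [hX] at hXodd
    exact (Int.not_odd_iff_even.mpr ⟨p * q, by ring⟩) hXodd
  rcases hpar with ⟨hp, hq⟩ | ⟨hp, hq⟩
  · -- p even, q odd : impossible
    exfalso
    have hqodd : Odd q := Int.odd_iff.mpr hq
    have hprod : (2 * p) * q = 2 ^ 0 * d ^ 4 := by
      rw [pow_zero, one_mul, hY]; try ring
    obtain ⟨s, t, ε, hε, hs, ht, hst, htodd, hcopst⟩ :=
      split_pow 4 0 (by norm_num) ⟨2, rfl⟩ hd ((odd_isCoprime_two hqodd).mul_left hcoppq)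
        hqodd hprod
    have hsE : Even s := by
      have h1 : Even (s ^ 4) := by
        rcases hε with rfl | rfl
        · exact ⟨p, by rw [pow_zero, one_mul] at hs; omega⟩
        · exact ⟨-p, by rw [pow_zero, one_mul] at hs; omega⟩
      exact (Int.even_pow.mp h1).1
    obtain ⟨f, hf⟩ := hsE
    have hf' : s = 2 * f := by omega
    have hd4 : d ^ 4 = 16 * (f ^ 4 * t ^ 4) := by
      rw [← hst, hf']; ring
    have hXval : e ^ 4 + d ^ 4 = 64 * f ^ 8 - t ^ 8 := by
      rw [pow_zero, one_mul, hf'] at hs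
      have h16 : ((2:ℤ) * f) ^ 4 = 16 * f ^ 4 := by ring
      have hp2 : p ^ 2 = 64 * f ^ 8 := by
        have hp8 : p = ε * (8 * f ^ 4) := by rcases hε with rfl | rfl <;> linarith [hs, h16]
        rw [hp8]; rcases hε with rfl | rfl <;> ring
      have hq2 : q ^ 2 = t ^ 8 := by rcases hε with rfl | rfl <;> rw [ht] <;> ring
      rw [hX, hp2, hq2]
    obtain ⟨a, ha⟩ := he
    obtain ⟨b, hb⟩ := htodd
    have hint : ((2*a+1)^4 + 16 * (f^4*(2*b+1)^4 - 4*f^8) + (2*b+1)^8 : ℤ) = 0 := by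
      rw [← ha, ← hb]
      linear_combination hXval - hd4
    have hcast := congrArg (fun z : ℤ => (z : ZMod 16)) hint
    push_cast at hcast
    exact zmod16_s4 _ _ _ hcast
  · -- q even, p odd
    have hpodd : Odd p := Int.odd_iff.mpr hp
    have hprod : (2 * q) * p = 2 ^ 0 * d ^ 4 := by
      rw [pow_zero, one_mul, hY]; try ring
    obtain ⟨s, g, ε, hε, hs, hg, hst, hgodd, hcopsg⟩ :=
      split_pow 4 0 (by norm_num) ⟨2, rfl⟩ hd ((odd_isCoprime_two hpodd).mul_left hcoppq.symm)
        hpodd hprod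
    have hsE : Even s := by
      have h1 : Even (s ^ 4) := by
        rcases hε with rfl | rfl
        · exact ⟨q, by rw [pow_zero, one_mul] at hs; omega⟩
        · exact ⟨-q, by rw [pow_zero, one_mul] at hs; omega⟩
      exact (Int.even_pow.mp h1).1
    obtain ⟨f, hf⟩ := hsE
    have hf' : s = 2 * f := by omega
    have hd4 : d ^ 4 = 16 * (f ^ 4 * g ^ 4) := by
      rw [← hst, hf']; ring
    have hXval : e ^ 4 + d ^ 4 = g ^ 8 - 64 * f ^ 8 := by
      rw [pow_zero, one_mul, hf'] at hs
      have h16 : ((2:ℤ) * f) ^ 4 = 16 * f ^ 4 := by ring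
      have hq2 : q ^ 2 = 64 * f ^ 8 := by
        have hq8 : q = ε * (8 * f ^ 4) := by rcases hε with rfl | rfl <;> linarith [hs, h16]
        rw [hq8]; rcases hε with rfl | rfl <;> ring
      have hp2 : p ^ 2 = g ^ 8 := by rcases hε with rfl | rfl <;> rw [hg] <;> ring
      rw [hX, hp2, hq2]
    rw [hf'] at hcopsg
    refine ⟨f, g, ?_, hd4, hgodd, hcopsg.of_mul_left_right⟩
    rw [hd4] at hXval
    linarith [hXval]

lemma ne_zero_of_odd {x : ℤ} (h : Odd x) : x ≠ 0 := by
  rintro rfl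
  exact (Int.not_odd_iff_even.mpr Even.zero) h

lemma keyAux : ∀ (N : ℕ) (A B C : ℤ), A.natAbs = N → IsCoprime A B → Odd B →
    -64 * A ^ 8 - 16 * A ^ 4 * B ^ 2 + B ^ 4 = C ^ 2 → A = 0 := by
  intro N
  induction N using Nat.strong_induction_on with
  | _ N ih =>
  intro A B C hN hcop hB h
  by_contra hA0
  have hCodd : Odd C := by
    apply odd_of_odd_pow (k := 2) (by norm_num)
    rw [← h]
    exact Even.add_odd ⟨-32 * A ^ 8 - 8 * A ^ 4 * B ^ 2, by ring⟩ hB.pow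
  obtain ⟨b2, hb2⟩ := (hB.pow : Odd (B ^ 2))
  obtain ⟨c1, hc1⟩ := hCodd
  set α := b2 - 4 * A ^ 4 - c1 with hαdef
  set β := b2 - 4 * A ^ 4 + c1 + 1 with hβdef
  have e1 : 2 * α = B ^ 2 - 8 * A ^ 4 - C := by rw [hαdef, hb2, hc1]; ring
  have e2 : 2 * β = B ^ 2 - 8 * A ^ 4 + C := by rw [hβdef, hb2, hc1]; ring
  have hαβ4 : 4 * (α * β) = 4 * (2 ^ 5 * A ^ 8) := by
    have e3 : (2 * α) * (2 * β) = 4 * (α * β) := by ring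
    rw [← e3, e1, e2]
    linear_combination h
  have hαβ : α * β = 2 ^ 5 * A ^ 8 := mul_left_cancel₀ four_ne_zero hαβ4
  have hsumodd : Odd (α + β) := ⟨b2 - 4 * A ^ 4, by rw [hαdef, hβdef]; ring⟩
  have hsum : α + β + 8 * A ^ 4 = B ^ 2 := by rw [hαdef, hβdef, hb2]; ring
  have hcopαβ : IsCoprime α β :=
    cop_helper 5 8 4 2 (by norm_num) (by norm_num) (by norm_num) hcop hsumodd hαβ hsum
  have hmain : ∃ m n ε : ℤ, (ε = 1 ∨ ε = -1) ∧ α + β = ε * (2 ^ 5 * m ^ 8) + ε * n ^ 8 ∧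
      (m * n) ^ 8 = A ^ 8 ∧ Odd n ∧ IsCoprime m n := by
    rcases Int.even_or_odd α with hαe | hαo
    · have hβo : Odd β := by
        obtain ⟨j, hj⟩ := hsumodd
        obtain ⟨i, hi⟩ := hαe
        exact ⟨j - i, by omega⟩
      obtain ⟨m, n, ε, hε, h1, h2, h3, h4, h5⟩ :=
        split_pow 8 5 (by norm_num) ⟨4, rfl⟩ hA0 hcopαβ hβo hαβ
      exact ⟨m, n, ε, hε, by rw [h1, h2]; try ring, h3, h4, h5⟩
    · obtain ⟨m, n, ε, hε, h1, h2, h3, h4, h5⟩ :=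
        split_pow 8 5 (by norm_num) ⟨4, rfl⟩ hA0 hcopαβ.symm hαo (by rw [mul_comm]; exact hαβ)
      exact ⟨m, n, ε, hε, by rw [h1, h2]; try ring, h3, h4, h5⟩
  obtain ⟨m, n, ε, hε, hsum2, hA8, hnodd, hcopmn⟩ := hmain
  have hε1 : ε = 1 := by
    rcases hε with rfl | rfl
    · rfl
    exfalso
    obtain ⟨a, ha⟩ := hnodd
    obtain ⟨b, hb⟩ := hB
    have hint : (-(4 * (8 * m ^ 8) + (2*a+1)^8) + 4 * (2 * A ^ 4) - (2*b+1)^2 : ℤ) = 0 := by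
      rw [← ha, ← hb]
      linear_combination hsum - hsum2
    have hcast := congrArg (fun z : ℤ => (z : ZMod 4)) hint
    push_cast at hcast
    exact zmod4_sign _ _ _ _ hcast
  subst hε1
  have hA4 : A ^ 4 = m ^ 4 * n ^ 4 := by
    have h1 := natAbs_eq_of_pow_eq 8 (by norm_num) hA8
    calc A ^ 4 = ((A.natAbs : ℤ)) ^ 4 := pow4_natAbs A
      _ = (((m * n).natAbs : ℤ)) ^ 4 := by rw [h1]
      _ = (m * n) ^ 4 := (pow4_natAbs _).symm
      _ = m ^ 4 * n ^ 4 := by ring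
  have hB2' : B ^ 2 = 32 * m ^ 8 + 8 * (m ^ 4 * n ^ 4) + n ^ 8 := by
    rw [← hA4, ← hsum]
    linarith [hsum2]
  have hm0 : m ≠ 0 := by
    rintro rfl
    apply hA0
    have : A ^ 4 = 0 := by rw [hA4]; ring
    exact pow_eq_zero_iff (by norm_num) |>.mp this
  obtain ⟨r, o, hE2, hm4, hoodd, hcopro⟩ := keyStep2 hm0 hnodd hcopmn hB2'
  have hr0 : r ≠ 0 := by
    rintro rfl
    apply hm0
    have : m ^ 4 = 0 := by rw [← hm4]; ring
    exact pow_eq_zero_iff (by norm_num) |>.mp this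
  obtain ⟨d, e, hE3, hr8, heodd, hdE, hcopde⟩ := keyStep3 hr0 hnodd hoodd hcopro hE2
  have hd0 : d ≠ 0 := by
    rintro rfl
    apply hr0
    have : r ^ 8 = 0 := by rw [← hr8]; ring
    exact pow_eq_zero_iff (by norm_num) |>.mp this
  obtain ⟨f, g, hE1', hd4, hgodd, hcopfg⟩ := keyStep4 hd0 hdE heodd hcopde hE3
  have hf0 : f ≠ 0 := by
    rintro rfl
    apply hd0
    have : d ^ 4 = 0 := by rw [hd4]; ring
    exact pow_eq_zero_iff (by norm_num) |>.mp this
  -- measure decrease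
  have hNA : A.natAbs = m.natAbs * n.natAbs := by
    rw [← Int.natAbs_mul]
    exact (natAbs_eq_of_pow_eq 8 (by norm_num) hA8).symm
  have hNm : m.natAbs = r.natAbs * o.natAbs := by
    rw [← Int.natAbs_mul]
    exact (natAbs_eq_of_pow_eq 4 (by norm_num) hm4).symm
  have hNr : r.natAbs = d.natAbs * e.natAbs := by
    rw [← Int.natAbs_mul]
    exact (natAbs_eq_of_pow_eq 8 (by norm_num) hr8).symm
  have hNd : d.natAbs = 2 * (f.natAbs * g.natAbs) := by
    have h1 : d ^ 4 = (2 * (f * g)) ^ 4 := by rw [hd4]; ring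
    have h2 := natAbs_eq_of_pow_eq 4 (by norm_num) h1
    rw [h2, Int.natAbs_mul, Int.natAbs_mul]
    rfl
  have hlt : f.natAbs < N := by
    have hg1 : 0 < g.natAbs := Int.natAbs_pos.mpr (ne_zero_of_odd hgodd)
    have he1 : 0 < e.natAbs := Int.natAbs_pos.mpr (ne_zero_of_odd heodd)
    have ho1 : 0 < o.natAbs := Int.natAbs_pos.mpr (ne_zero_of_odd hoodd)
    have hn1 : 0 < n.natAbs := Int.natAbs_pos.mpr (ne_zero_of_odd hnodd)
    have hf1 : 0 < f.natAbs := Int.natAbs_pos.mpr hf0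
    have hNval2 : N = 2 * f.natAbs * (g.natAbs * (e.natAbs * (o.natAbs * n.natAbs))) := by
      rw [← hN, hNA, hNm, hNr, hNd]
      ring
    have hRpos : 0 < g.natAbs * (e.natAbs * (o.natAbs * n.natAbs)) := by
      exact Nat.mul_pos hg1 (Nat.mul_pos he1 (Nat.mul_pos ho1 hn1))
    have h2fR : 2 * f.natAbs ≤ 2 * f.natAbs * (g.natAbs * (e.natAbs * (o.natAbs * n.natAbs))) :=
      Nat.le_mul_of_pos_right _ hRpos
    rw [hNval2]
    omega
  have := ih f.natAbs hlt f (g ^ 2) (e ^ 2) rfl (hcopfg.pow_right) (hgodd.pow)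
    (by linear_combination -hE1')
  exact hf0 this

theorem stmt_9 (A B C : ℤ) (hcop : IsCoprime A B) (hB : Odd B)
    (h : -64 * A ^ 8 - 16 * A ^ 4 * B ^ 2 + B ^ 4 = C ^ 2) :
    (A.natAbs, B.natAbs, C.natAbs) = (0, 1, 1) := by
  have hA0 : A = 0 := keyAux A.natAbs A B C rfl hcop hB h
  subst hA0
  have hBu : IsUnit B := isCoprime_zero_left.mp hcop
  have hC1 : C.natAbs = 1 := by
    have hC2 : C ^ 2 = 1 := by
      rcases Int.isUnit_iff.mp hBu with rfl | rfl <;> linarith [h]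
    have h1 : C.natAbs ^ 2 = 1 := by
      have := congrArg Int.natAbs hC2
      simpa [Int.natAbs_pow] using this
    rcases Nat.eq_zero_or_pos C.natAbs with h0 | hp
    · exfalso; rw [h0] at h1; simp at h1
    · nlinarith [h1, hp]
  have hB1 : B.natAbs = 1 := by
    rcases Int.isUnit_iff.mp hBu with rfl | rfl <;> rfl
  simp [hB1, hC1]
end

section
/- For n even and gcd(P,Q) = 1, the gcd of P and U_n(P,Q)/P divides n/2. -/
def LucasU (P Q : ℤ) : ℕ → ℤ
  | 0 => 0
  | 1 => 1
  | n + 2 => P * LucasU P Q (n + 1) - Q * LucasU P Q n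

lemma LucasU_key (P Q : ℤ) : ∀ k : ℕ, ∃ a b : ℤ,
    LucasU P Q (2*k+1) = (-Q)^k + P^2 * a ∧
    LucasU P Q (2*k+2) = ((k : ℤ)+1) * (-Q)^k * P + P^2 * b := by
  intro k
  induction k with
  | zero =>
    refine ⟨0, 0, by simp [LucasU], ?_⟩
    show P * LucasU P Q 1 - Q * LucasU P Q 0 = _
    simp [LucasU]
  | succ k ih =>
    obtain ⟨a, b, h1, h2⟩ := ih
    refine ⟨((k:ℤ)+1)*(-Q)^k + P*b - Q*a,
            P*(((k:ℤ)+1)*(-Q)^k + P*b - Q*a) - Q*b, ?_, ?_⟩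
    · have : LucasU P Q (2*(k+1)+1) = P * LucasU P Q (2*k+2) - Q * LucasU P Q (2*k+1) := by
        show LucasU P Q (2*k+1+2) = _
        rfl
      rw [this, h1, h2]; ring
    · have h3 : LucasU P Q (2*(k+1)+1) = (-Q)^(k+1) + P^2 * (((k:ℤ)+1)*(-Q)^k + P*b - Q*a) := by
        have : LucasU P Q (2*(k+1)+1) = P * LucasU P Q (2*k+2) - Q * LucasU P Q (2*k+1) := by
          show LucasU P Q (2*k+1+2) = _
          rfl
        rw [this, h1, h2]; ring
      have : LucasU P Q (2*(k+1)+2) = P * LucasU P Q (2*(k+1)+1) - Q * LucasU P Q (2*k+2) := by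
        show LucasU P Q (2*k+2+2) = _
        rfl
      rw [this, h3, h2]; push_cast; ring

theorem stmt_13 (P Q : ℤ) (hP : P ≠ 0) (hcop : IsCoprime P Q) (n : ℕ)
    (hn : 0 < n) (hev : Even n) :
    (Int.gcd P (LucasU P Q n / P) : ℤ) ∣ (n / 2 : ℤ) := by
  obtain ⟨m, hm⟩ := hev
  obtain ⟨k, rfl⟩ : ∃ k, m = k + 1 := ⟨m - 1, by omega⟩
  have hn2 : n = 2*k+2 := by omega
  subst hn2
  obtain ⟨a, b, h1, h2⟩ := LucasU_key P Q k
  have hdiv : LucasU P Q (2*k+2) / P = ((k:ℤ)+1)*(-Q)^k + P*b := by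
    have : LucasU P Q (2*k+2) = (((k:ℤ)+1)*(-Q)^k + P*b) * P := by rw [h2]; ring
    rw [this, Int.mul_ediv_cancel _ hP]
  set g : ℤ := (Int.gcd P (LucasU P Q (2*k+2) / P) : ℤ) with hg
  have hgP : g ∣ P := Int.gcd_dvd_left _ _
  have hgU : g ∣ LucasU P Q (2*k+2) / P := Int.gcd_dvd_right _ _
  rw [hdiv] at hgU
  have hgk : g ∣ ((k:ℤ)+1) * (-Q)^k := by
    have := hgU.sub (hgP.mul_right b)
    simpa using this
  have hcg : IsCoprime g ((-Q)^k) :=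
    ((hcop.of_isCoprime_of_dvd_left hgP).neg_right).pow_right
  have hfin : g ∣ ((k:ℤ)+1) := hcg.dvd_of_dvd_mul_right hgk
  have : ((2*k+2 : ℕ) : ℤ) / 2 = (k:ℤ) + 1 := by push_cast; omega
  rw [this]
  exact hfin
end
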